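/- Let T be a tree on ω×ω and let s, t be finite sequences of naturals. If for every Hechler tree H with root s the set A_{s,t} ∩ [H] is nonempty, then there are infinitely many n ∈ ω such that for every Hechler tree H with root s⌢n the set A_{s⌢n,t} ∩ [H] is nonempty. -/
import Mathlib


/-- The restriction `x↾n` of `x : ℕ → ℕ` to its first `n` values, as a finite sequence. -/
def res (x : ℕ → ℕ) (n : ℕ) : List ℕ := List.ofFn fun i : Fin n => x i

/-- A subtree of `ω^{<ω}`: a set of finite sequences closed under initial segments. -/
def IsSubtree (T : Set (List ℕ)) : Prop := ∀ s ∈ T, ∀ t : List ℕ, t <+: s → t ∈ T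

/-- `[T]`, the set of branches of a subtree `T`. -/
def branches (T : Set (List ℕ)) : Set (ℕ → ℕ) := {x | ∀ n, res x n ∈ T}

/-- A Hechler tree with root `s`: a subtree containing `s`, all of whose members are
comparable with `s`, and in which every node extending `s` splits cofinitely often. -/
def IsHechlerRoot (H : Set (List ℕ)) (s : List ℕ) : Prop :=
  IsSubtree H ∧ s ∈ H ∧ (∀ t ∈ H, t <+: s ∨ s <+: t) ∧
    ∀ t ∈ H, s <+: t → {n : ℕ | t ++ [n] ∉ H}.Finite

/-- A tree on `ω × ω`: pairs of finite sequences of equal length, closed under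
coordinatewise initial segments. -/
def IsTree2 (T : Set (List ℕ × List ℕ)) : Prop :=
  (∀ p ∈ T, p.1.length = p.2.length) ∧
    ∀ p ∈ T, ∀ n : ℕ, (p.1.take n, p.2.take n) ∈ T

/-- `A_{s,t}`: the set of `x ⊇ s` such that some `y ⊇ t` gives a branch `(x, y)` of `T`. -/
def Aset (T : Set (List ℕ × List ℕ)) (s t : List ℕ) : Set (ℕ → ℕ) :=
  {x | res x s.length = s ∧ ∃ y : ℕ → ℕ, res y t.length = t ∧ ∀ n, (res x n, res y n) ∈ T}

lemma res_length (x : ℕ → ℕ) (n : ℕ) : (res x n).length = n := by simp [res]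

lemma res_succ (x : ℕ → ℕ) (n : ℕ) : res x (n + 1) = res x n ++ [x n] := by
  rw [res, List.ofFn_succ']
  simp [res, List.concat_eq_append]

lemma res_prefix (x : ℕ → ℕ) {a b : ℕ} (h : a ≤ b) : res x a <+: res x b := by
  induction b with
  | zero => interval_cases a; exact List.prefix_refl _
  | succ b ih =>
    rcases Nat.lt_or_ge a (b + 1) with h' | h'
    · exact (ih (Nat.lt_succ_iff.mp h')).trans
        (by rw [res_succ]; exact List.prefix_append _ _)
    · have : a = b + 1 := le_antisymm h h'
      subst this; exact List.prefix_refl _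

theorem infinitely_many_good_successors (T : Set (List ℕ × List ℕ)) (hT : IsTree2 T)
    (s t : List ℕ)
    (h : ∀ H : Set (List ℕ), IsHechlerRoot H s → (Aset T s t ∩ branches H).Nonempty) :
    {n : ℕ | ∀ H : Set (List ℕ), IsHechlerRoot H (s ++ [n]) →
      (Aset T (s ++ [n]) t ∩ branches H).Nonempty}.Infinite := by
  set G : Set ℕ := {n : ℕ | ∀ H : Set (List ℕ), IsHechlerRoot H (s ++ [n]) →
      (Aset T (s ++ [n]) t ∩ branches H).Nonempty} with hGdef
  by_contra hG
  rw [Set.not_infinite] at hG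
  have hbad : ∀ n : ℕ, ∃ H : Set (List ℕ), n ∉ G →
      IsHechlerRoot H (s ++ [n]) ∧ Aset T (s ++ [n]) t ∩ branches H = ∅ := by
    intro n
    by_cases hn : n ∈ G
    · exact ⟨∅, fun h' => absurd hn h'⟩
    · have h2 : ¬ ∀ H : Set (List ℕ), IsHechlerRoot H (s ++ [n]) →
          (Aset T (s ++ [n]) t ∩ branches H).Nonempty := hn
      push_neg at h2
      obtain ⟨H, hH1, hH2⟩ := h2
      exact ⟨H, fun _ => ⟨hH1, hH2⟩⟩
  choose Hn hHn using hbad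
  set H : Set (List ℕ) := {u | u <+: s ∨ ∃ n, n ∉ G ∧ u ∈ Hn n} with hHdef
  have hroot : ∀ n, n ∉ G → s ++ [n] ∈ Hn n := fun n hn => ((hHn n hn).1).2.1
  -- key structural lemma
  have key : ∀ u ∈ H, s <+: u → u ≠ s → ∃ n, n ∉ G ∧ u ∈ Hn n ∧ s ++ [n] <+: u := by
    rintro u (hu | ⟨n, hn, hu⟩) hsu hne
    · exact absurd (hu.eq_of_length (le_antisymm hu.length_le hsu.length_le)) hne
    · refine ⟨n, hn, hu, ?_⟩
      rcases (hHn n hn).1.2.2.1 u hu with h' | h'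
      · have hlt : s.length < u.length := by
          rcases Nat.lt_or_ge s.length u.length with h3 | h3
          · exact h3
          · exact absurd (hsu.eq_of_length (le_antisymm hsu.length_le h3)).symm hne
        have hlen : u.length = s.length + 1 := by
          have := h'.length_le; simp at this; omega
        have : u = s ++ [n] := h'.eq_of_length (by simp [hlen])
        rw [this]
      · exact h'
  have hHsub : IsSubtree H := by
    rintro u (hu | ⟨n, hn, hu⟩) v hv
    · exact Or.inl (hv.trans hu)
    · exact Or.inr ⟨n, hn, (hHn n hn).1.1 u hu v hv⟩
  have hHroot : IsHechlerRoot H s := by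
    refine ⟨hHsub, Or.inl (List.prefix_refl s), ?_, ?_⟩
    · rintro u (hu | ⟨n, hn, hu⟩)
      · exact Or.inl hu
      · rcases (hHn n hn).1.2.2.1 u hu with h' | h'
        · exact List.prefix_or_prefix_of_prefix h' (List.prefix_append s [n])
        · exact Or.inr ((List.prefix_append s [n]).trans h')
    · intro u hu hsu
      by_cases hne : u = s
      · subst hne
        apply hG.subset
        intro m hm
        by_contra hmG
        exact hm (Or.inr ⟨m, hmG, hroot m hmG⟩)
      · obtain ⟨n, hn, hun, hsnu⟩ := key u hu hsu hne
        apply ((hHn n hn).1.2.2.2 u hun hsnu).subset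
        intro m hm hmem
        exact hm (Or.inr ⟨n, hn, hmem⟩)
  obtain ⟨x, hxA, hxH⟩ := h H hHroot
  obtain ⟨hxs, y, hyt, hxy⟩ := hxA
  set n := x s.length with hn_def
  have hres : res x (s.length + 1) = s ++ [n] := by rw [res_succ, hxs]
  have hslen : (s ++ [n]).length = s.length + 1 := by simp
  have hspre : s <+: s ++ [n] := List.prefix_append s [n]
  have hnG : n ∉ G := by
    have hmem := hxH (s.length + 1)
    rw [hres] at hmem
    rcases hmem with h' | ⟨m, hm, hmem⟩
    · have := h'.length_le; simp at this
    · rcases (hHn m hm).1.2.2.1 _ hmem with h' | h'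
      · have : s ++ [n] = s ++ [m] := h'.eq_of_length (by simp)
        have : n = m := by simpa using List.append_cancel_left this
        rw [this]; exact hm
      · have : s ++ [m] = s ++ [n] := h'.eq_of_length (by simp)
        have : m = n := by simpa using List.append_cancel_left this
        rw [← this]; exact hm
  have hsn_mem : s ++ [n] ∈ Hn n := hroot n hnG
  have hbr : x ∈ branches (Hn n) := by
    intro m
    rcases le_or_gt m (s.length + 1) with hm | hm
    · exact (hHn n hnG).1.1 _ hsn_mem _ (hres ▸ res_prefix x hm)
    · have hmem := hxH m
      have hsu : s <+: res x m := hxs ▸ res_prefix x (by omega)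
      have hne : res x m ≠ s := by
        intro hc
        have := congrArg List.length hc
        rw [res_length] at this; omega
      obtain ⟨k, hk, hmemk, hsk⟩ := key _ hmem hsu hne
      have hpre2 : s ++ [n] <+: res x m := hres ▸ res_prefix x (by omega)
      have heq : s ++ [k] = s ++ [n] := by
        rcases List.prefix_or_prefix_of_prefix hsk hpre2 with h' | h'
        · exact h'.eq_of_length (by simp)
        · exact (h'.eq_of_length (by simp)).symm
      have : k = n := by simpa using List.append_cancel_left heq
      rw [← this]; exact hmemk
  have hxA' : x ∈ Aset T (s ++ [n]) t := by
    refine ⟨?_, y, hyt, hxy⟩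
    rw [hslen]; exact hres
  have : x ∈ Aset T (s ++ [n]) t ∩ branches (Hn n) := ⟨hxA', hbr⟩
  rw [(hHn n hnG).2] at this
  exact this
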